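/- Fix p with 1 < p < 2 and 0 < ε₋ ≤ ε₊ < ∞, and fix t ≥ 0. Consider g(a) := (1/2) a^{p-2} t² + (1/p − 1/2) a^p for a > 0. Then clamp(t) := max(ε₋, min(t, ε₊)) is the unique minimizer of g on the interval [ε₋, ε₊]: for every a ∈ [ε₋, ε₊] one has g(clamp(t)) ≤ g(a), with strict inequality whenever a ≠ clamp(t). -/

import Mathlib

/-!
The objective has derivative `(2 - p)/2 · a^(p-3) · (a² - t²)` in `a > 0`, so it strictly
decreases up to `t` and strictly increases from `t` on. Restricted to `[ε₋, ε₊]` its unique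
minimizer is therefore the point of the interval closest to `t`, namely `clamp(t)`.
-/

open Set

theorem apply_clamp_lt_of_ne {α β : Type*} [LinearOrder α] [Preorder β] {f : α → β}
    {lo hi t a : α} (hanti : StrictAntiOn f (Icc lo hi ∩ Iic t))
    (hmono : StrictMonoOn f (Icc lo hi ∩ Ici t)) (ha : a ∈ Icc lo hi)
    (hne : a ≠ max lo (min t hi)) : f (max lo (min t hi)) < f a := by
  have hm : max lo (min t hi) ∈ Icc lo hi :=
    ⟨le_max_left _ _, max_le (ha.1.trans ha.2) (min_le_right _ _)⟩
  rcases hne.lt_or_gt with h | h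
  · have hmt : max lo (min t hi) ≤ t := by grind
    exact hanti ⟨ha, h.le.trans hmt⟩ ⟨hm, hmt⟩ h
  · have htm : t ≤ max lo (min t hi) := by grind
    exact hmono ⟨hm, htm⟩ ⟨ha, htm.trans h.le⟩ h

noncomputable def clampObjective (p t a : ℝ) : ℝ :=
  (1 / 2) * a ^ (p - 2) * t ^ 2 + (1 / p - 1 / 2) * a ^ p

namespace clampObjective

variable {p t : ℝ}

theorem hasDerivAt (hp : p ≠ 0) {a : ℝ} (ha : 0 < a) :
    HasDerivAt (clampObjective p t) ((2 - p) / 2 * a ^ (p - 3) * (a ^ 2 - t ^ 2)) a := by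
  have hpow (q : ℝ) : HasDerivAt (fun x : ℝ => x ^ q) (q * a ^ (q - 1)) a :=
    Real.hasDerivAt_rpow_const (Or.inl ha.ne')
  refine ((((hpow (p - 2)).const_mul (1 / 2)).mul_const (t ^ 2)).add
    ((hpow p).const_mul (1 / p - 1 / 2))).congr_deriv ?_
  have hsub : p - 2 - 1 = p - 3 := by ring
  have hsplit : a ^ (p - 1) = a ^ (p - 3) * a ^ 2 := by
    rw [← Real.rpow_two, ← Real.rpow_add ha]; ring_nf
  rw [hsub, hsplit]
  field_simp
  ring

theorem continuousOn (hp : p ≠ 0) : ContinuousOn (clampObjective p t) (Ioi 0) :=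
  fun _ ha => (hasDerivAt hp ha).continuousAt.continuousWithinAt

theorem strictAntiOn (hp : p ≠ 0) (hp2 : p < 2) :
    StrictAntiOn (clampObjective p t) (Ioc 0 t) := by
  refine strictAntiOn_of_deriv_neg (convex_Ioc 0 t) ((continuousOn hp).mono Ioc_subset_Ioi_self)
    fun a ha => ?_
  rw [interior_Ioc] at ha
  rw [(hasDerivAt hp ha.1).deriv]
  have hsq : a ^ 2 < t ^ 2 := by nlinarith [ha.1, ha.2]
  have hpow_pos := Real.rpow_pos_of_pos ha.1 (p - 3)
  exact mul_neg_of_pos_of_neg (by positivity) (by linarith)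

theorem strictMonoOn (hp : p ≠ 0) (hp2 : p < 2) (ht : 0 ≤ t) :
    StrictMonoOn (clampObjective p t) (Ioi 0 ∩ Ici t) := by
  refine strictMonoOn_of_deriv_pos ((convex_Ioi 0).inter (convex_Ici t))
    ((continuousOn hp).mono inter_subset_left) fun a ha => ?_
  rw [interior_inter, interior_Ioi, interior_Ici] at ha
  rw [(hasDerivAt hp ha.1).deriv]
  have hsq : t ^ 2 < a ^ 2 := by
    have hta : t < a := ha.2
    nlinarith
  have hpow_pos := Real.rpow_pos_of_pos ha.1 (p - 3)
  exact mul_pos (by positivity) (by linarith)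

end clampObjective

theorem stmt_4 (p εm εp t : ℝ) (hp1 : 1 < p) (hp2 : p < 2)
    (hεm : 0 < εm) (ht : 0 ≤ t) :
    ∀ a ∈ Set.Icc εm εp,
      ((1 / 2) * (max εm (min t εp)) ^ (p - 2) * t ^ 2
          + (1 / p - 1 / 2) * (max εm (min t εp)) ^ p)
        ≤ ((1 / 2) * a ^ (p - 2) * t ^ 2 + (1 / p - 1 / 2) * a ^ p) ∧
      (a ≠ max εm (min t εp) →
        ((1 / 2) * (max εm (min t εp)) ^ (p - 2) * t ^ 2
            + (1 / p - 1 / 2) * (max εm (min t εp)) ^ p)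
          < ((1 / 2) * a ^ (p - 2) * t ^ 2 + (1 / p - 1 / 2) * a ^ p)) := by
  intro a ha
  have hp : p ≠ 0 := by positivity
  have hpos : Icc εm εp ⊆ Ioi 0 := fun x hx => hεm.trans_le hx.1
  have hlt : a ≠ max εm (min t εp) →
      clampObjective p t (max εm (min t εp)) < clampObjective p t a :=
    apply_clamp_lt_of_ne
      ((clampObjective.strictAntiOn hp hp2).mono fun x hx => ⟨hpos hx.1, hx.2⟩)
      ((clampObjective.strictMonoOn hp hp2 ht).mono fun x hx => ⟨hpos hx.1, hx.2⟩) ha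
  refine ⟨?_, hlt⟩
  rcases eq_or_ne a (max εm (min t εp)) with rfl | hne
  · exact le_rfl
  · exact (hlt hne).le
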